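/- arXiv:1901.06929 — 2 statements merged into one kernel-verified Lean document; each statement's English description precedes it below -/
import Mathlib

section
/- Let G = Z/2 * Z/2. Then γ_1(G)/γ_2(G) ≅ Z/2 ⊕ Z/2 and γ_k(G)/γ_{k+1}(G) ≅ Z/2 for every k ≥ 2. -/
/-!
Sending the generators `a, b` to the reflections `sr 0, sr 1` identifies `Z2Z2` with the infinite
dihedral group `D∞ = DihedralGroup 0`, the inverse sending the rotation `r i` to `(a * b) ^ i`.
In `D∞` a commutator with a reflection doubles a rotation, so `γ₂ = ⟨r 2⟩` and inductively
`γₖ = ⟨r (2 ^ (k - 1))⟩` for `k ≥ 2`. Hence `γₖ / γₖ₊₁ ≅ ⟨g⟩ / ⟨g ^ 2⟩ ≅ ℤ/2` with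
`g = r (2 ^ (k - 1))` of infinite order, while `D∞ / γ₂` is detected by the parity of the rotation
and the reflection bit.
-/

/-- The free product `ℤ/2 * ℤ/2`, presented with two generators of order 2. -/
abbrev Z2Z2 := PresentedGroup {w : FreeGroup (Fin 2) | ∃ i, w = FreeGroup.of i ^ 2}

open Subgroup
open scoped commutatorElement

theorem ZMod.castHom_eq_zero_iff_dvd {m n : ℕ} (h : m ∣ n) (x : ZMod n) :
    ZMod.castHom h (ZMod m) x = 0 ↔ (m : ZMod n) ∣ x := by
  constructor
  · intro hx
    rw [← ZMod.intCast_zmod_cast x, map_intCast, ZMod.intCast_zmod_eq_zero_iff_dvd] at hx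
    obtain ⟨c, hc⟩ := hx
    exact ⟨c, by rw [← ZMod.intCast_zmod_cast x, hc]; push_cast; rfl⟩
  · rintro ⟨c, rfl⟩
    rw [map_mul, map_natCast, ZMod.natCast_self, zero_mul]

section

variable {G H : Type*} [Group G] [Group H]

theorem Subgroup.map_top_lowerCentralSeries_of_surjective {f : G →* H}
    (hf : Function.Surjective f) (k : ℕ) :
    ((⊤ : Subgroup G).lowerCentralSeries k).map f = (⊤ : Subgroup H).lowerCentralSeries k := by
  rw [map_lowerCentralSeries, map_top_of_surjective f hf]

def QuotientGroup.quotientSubgroupOfCongr (e : G ≃* H) {A B : Subgroup G} {A' B' : Subgroup H}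
    [(B.subgroupOf A).Normal] [(B'.subgroupOf A').Normal] (hA : A.map e = A')
    (hB : B.map e = B') : A ⧸ B.subgroupOf A ≃* A' ⧸ B'.subgroupOf A' :=
  QuotientGroup.congr _ _ ((e.subgroupMap A).trans (MulEquiv.subgroupCongr hA)) (by
    subst hA hB
    ext ⟨_, a, ha, rfl⟩
    simpa [mem_subgroupOf, Subtype.ext_iff] using fun _ => ha)

theorem zpow_mem_zpowers_pow_iff {g : G} (hg : ¬IsOfFinOrder g) (j : ℤ) (k : ℕ) :
    g ^ j ∈ zpowers (g ^ k) ↔ (k : ℤ) ∣ j := by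
  rw [← zpow_natCast, mem_zpowers_iff]
  simp_rw [← zpow_mul, (injective_zpow_iff_not_isOfFinOrder.mpr hg).eq_iff, dvd_def, eq_comm]

theorem Subgroup.nonempty_zpowers_quotient_mulEquiv_zmod {g : G} (hg : ¬IsOfFinOrder g) (k : ℕ) :
    Nonempty (zpowers g ⧸ (zpowers (g ^ k)).subgroupOf (zpowers g) ≃* Multiplicative (ZMod k)) := by
  let e : Multiplicative ℤ ≃* zpowers g :=
    MonoidHom.ofInjective (f := zpowersHom G g) (injective_zpow_iff_not_isOfFinOrder.mpr hg)
  let f : zpowers g →* Multiplicative (ZMod k) :=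
    (Int.castAddHom (ZMod k)).toMultiplicative.comp e.symm.toMonoidHom
  have hf : Function.Surjective f := ZMod.intCast_surjective.comp e.symm.surjective
  have hker : f.ker = (zpowers (g ^ k)).subgroupOf (zpowers g) := by
    ext y
    obtain ⟨j, rfl⟩ := e.surjective y
    have hfj : f (e j) = Multiplicative.ofAdd ((j.toAdd : ℤ) : ZMod k) := by simp [f]
    have hej : (e j : G) = g ^ j.toAdd := rfl
    rw [MonoidHom.mem_ker, mem_subgroupOf, hfj, hej, zpow_mem_zpowers_pow_iff hg, ofAdd_eq_one,
      ZMod.intCast_zmod_eq_zero_iff_dvd]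
  exact ⟨(QuotientGroup.quotientMulEquivOfEq hker.symm).trans
    (QuotientGroup.quotientKerEquivOfSurjective f hf)⟩

variable {a b : G}

theorem mul_zpow_mul_eq_zpow_neg_of_involutions (ha : a * a = 1) (hb : b * b = 1) (k : ℤ) :
    a * (a * b) ^ k * a = (a * b) ^ (-k) := by
  have ha' : a⁻¹ = a := inv_eq_of_mul_eq_one_right ha
  have hb' : b⁻¹ = b := inv_eq_of_mul_eq_one_right hb
  calc a * (a * b) ^ k * a = (a * (a * b) * a⁻¹) ^ k := by rw [conj_zpow, ha']
    _ = (a * b) ^ (-k) := by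
      rw [zpow_neg, ← inv_zpow, mul_inv_rev, ha', hb', ← mul_assoc, ha, one_mul]

theorem zpow_mul_eq_mul_zpow_neg_of_involutions (ha : a * a = 1) (hb : b * b = 1) (k : ℤ) :
    (a * b) ^ k * a = a * (a * b) ^ (-k) := by
  rw [← mul_zpow_mul_eq_zpow_neg_of_involutions ha hb, ← mul_assoc, ← mul_assoc, ha, one_mul]

end

namespace DihedralGroup

variable {n : ℕ}

theorem commutatorElement_r_r (i j : ZMod n) : ⁅r i, r j⁆ = 1 := by
  rw [commutatorElement_def, r_mul_r, inv_r, r_mul_r, inv_r, r_mul_r, one_def]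
  congr 1
  ring

theorem commutatorElement_r_sr (i j : ZMod n) : ⁅r i, sr j⁆ = r (2 * i) := by
  rw [commutatorElement_def, r_mul_sr, inv_r, sr_mul_r, inv_sr, sr_mul_sr]
  congr 1
  ring

theorem commutatorElement_sr_r (i j : ZMod n) : ⁅sr i, r j⁆ = r (-2 * j) := by
  rw [commutatorElement_def, sr_mul_r, inv_sr, sr_mul_sr, inv_r, r_mul_r]
  congr 1
  ring

theorem commutatorElement_sr_sr (i j : ZMod n) : ⁅sr i, sr j⁆ = r (2 * (j - i)) := by
  rw [commutatorElement_def, sr_mul_sr, inv_sr, r_mul_sr, inv_sr, sr_mul_sr]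
  congr 1
  ring

theorem r_mem_zpowers_r_iff {x m : ZMod n} : r x ∈ zpowers (r m) ↔ m ∣ x := by
  simp only [mem_zpowers_iff, r_zpow, r.injEq]
  constructor
  · rintro ⟨k, rfl⟩
    exact dvd_mul_right _ _
  · rintro ⟨c, rfl⟩
    exact ⟨(c.cast : ℤ), by rw [ZMod.intCast_zmod_cast]⟩

theorem sr_notMem_zpowers_r (x m : ZMod n) : sr x ∉ zpowers (r m) := by
  simp [mem_zpowers_iff, r_zpow]

theorem commutator_zpowers_r_top (m : ZMod n) :
    ⁅zpowers (r m), ⊤⁆ = zpowers (r (2 * m)) := by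
  apply le_antisymm
  · rw [commutator_le]
    rintro _ ⟨k, rfl⟩ (j | j) -
    · simp only [r_zpow, commutatorElement_r_r]
      exact one_mem _
    · simp only [r_zpow, commutatorElement_r_sr, r_mem_zpowers_r_iff]
      exact ⟨k, by ring⟩
  · rw [zpowers_le, ← commutatorElement_r_sr m 0]
    exact commutator_mem_commutator (mem_zpowers (r m)) (mem_top _)

theorem commutator_eq_zpowers_r_two : commutator (DihedralGroup n) = zpowers (r 2) := by
  apply le_antisymm
  · rw [commutator_def, commutator_le]
    rintro (i | i) - (j | j) -
    · rw [commutatorElement_r_r]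
      exact one_mem _
    all_goals
      simp only [commutatorElement_r_sr, commutatorElement_sr_r, commutatorElement_sr_sr,
        r_mem_zpowers_r_iff]
    · exact dvd_mul_right _ _
    · exact ⟨-j, by ring⟩
    · exact dvd_mul_right _ _
  · rw [zpowers_le, ← mul_one (2 : ZMod n), ← commutatorElement_r_sr 1 0]
    exact commutator_mem_commutator (mem_top _) (mem_top _)

theorem lowerCentralSeries_succ_eq_zpowers_r (k : ℕ) :
    (⊤ : Subgroup (DihedralGroup n)).lowerCentralSeries (k + 1) = zpowers (r (2 ^ (k + 1))) := by
  induction k with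
  | zero => rw [zero_add, pow_one, top_lowerCentralSeries_one, commutator_eq_zpowers_r_two]
  | succ k ih =>
    rw [Subgroup.lowerCentralSeries_succ, ih, commutator_zpowers_r_top, pow_succ' 2 (k + 1)]

theorem not_isOfFinOrder_r {x : ZMod 0} (hx : x ≠ 0) : ¬IsOfFinOrder (r x) := by
  rw [isOfFinOrder_iff_pow_eq_one]
  rintro ⟨k, hk, h⟩
  rw [r_pow, one_def, r.injEq, mul_eq_zero] at h
  exact h.elim hx (Nat.cast_ne_zero.mpr hk.ne')

def toZModTwoProd (h : 2 ∣ n) : DihedralGroup n →* Multiplicative (ZMod 2 × ZMod 2) where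
  toFun
    | r i => .ofAdd (ZMod.castHom h _ i, 0)
    | sr i => .ofAdd (ZMod.castHom h _ i, 1)
  map_one' := by rw [one_def]; simp only [map_zero]; rfl
  map_mul' := by
    rintro (i | i) (j | j) <;>
      simp only [r_mul_r, r_mul_sr, sr_mul_r, sr_mul_sr, ← ofAdd_add, Prod.mk_add_mk, map_add,
        map_sub, CharTwo.sub_eq_add, CharTwo.add_self_eq_zero, zero_add, add_comm]

theorem toZModTwoProd_surjective (h : 2 ∣ n) : Function.Surjective (toZModTwoProd h) := by
  rintro ⟨x, y⟩
  obtain ⟨i, rfl⟩ := ZMod.castHom_surjective h x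
  fin_cases y
  exacts [⟨r i, rfl⟩, ⟨sr i, rfl⟩]

theorem ker_toZModTwoProd (h : 2 ∣ n) : (toZModTwoProd h).ker = zpowers (r 2) := by
  ext (i | i)
  · rw [r_mem_zpowers_r_iff, ← Nat.cast_two (R := ZMod n), ← ZMod.castHom_eq_zero_iff_dvd h,
      MonoidHom.mem_ker]
    simp [toZModTwoProd]
  · simp [toZModTwoProd, sr_notMem_zpowers_r]

noncomputable def abelianizationEquiv (h : 2 ∣ n) :
    Abelianization (DihedralGroup n) ≃* Multiplicative (ZMod 2 × ZMod 2) :=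
  (QuotientGroup.quotientMulEquivOfEq
      (commutator_eq_zpowers_r_two.trans (ker_toZModTwoProd h).symm)).trans
    (QuotientGroup.quotientKerEquivOfSurjective _ (toZModTwoProd_surjective h))

variable {G : Type*} [Group G] {a b : G}

/-- `ZMod.cast : ZMod 0 → ℤ` is the identity of `ℤ`. -/
def liftOfInvolutions (ha : a * a = 1) (hb : b * b = 1) : DihedralGroup 0 →* G where
  toFun
    | r i => (a * b) ^ (i.cast : ℤ)
    | sr i => a * (a * b) ^ (i.cast : ℤ)
  map_one' := by rw [one_def]; simp only [ZMod.cast_zero, zpow_zero]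
  map_mul' := by
    rintro (i | i) (j | j) <;>
      simp only [r_mul_r, r_mul_sr, sr_mul_r, sr_mul_sr, ZMod.cast_add dvd_rfl,
        ZMod.cast_sub dvd_rfl]
    · exact zpow_add _ _ _
    · rw [← mul_assoc, zpow_mul_eq_mul_zpow_neg_of_involutions ha hb, mul_assoc, ← zpow_add,
        neg_add_eq_sub]
    · rw [mul_assoc, zpow_add]
    · rw [← mul_assoc, mul_zpow_mul_eq_zpow_neg_of_involutions ha hb, ← zpow_add, neg_add_eq_sub]

theorem liftOfInvolutions_sr (ha : a * a = 1) (hb : b * b = 1) (i : ZMod 0) :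
    liftOfInvolutions ha hb (sr i) = a * (a * b) ^ (i.cast : ℤ) :=
  rfl

theorem liftOfInvolutions_r (ha : a * a = 1) (hb : b * b = 1) (i : ZMod 0) :
    liftOfInvolutions ha hb (r i) = (a * b) ^ (i.cast : ℤ) :=
  rfl

end DihedralGroup

namespace Z2Z2

open DihedralGroup

theorem of_mul_self (i : Fin 2) : (PresentedGroup.of i : Z2Z2) * PresentedGroup.of i = 1 := by
  rw [← sq, PresentedGroup.of, ← map_pow]
  exact PresentedGroup.one_of_mem ⟨i, rfl⟩

def toDihedral : Z2Z2 →* DihedralGroup 0 :=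
  PresentedGroup.toGroup (f := fun i : Fin 2 => (sr (i : ℕ) : DihedralGroup 0)) <| by
    rintro _ ⟨i, rfl⟩
    rw [map_pow, FreeGroup.lift_apply_of, sq, sr_mul_self]

theorem toDihedral_of (i : Fin 2) : toDihedral (PresentedGroup.of i) = sr (i : ℕ) :=
  PresentedGroup.toGroup.of _

def ofDihedral : DihedralGroup 0 →* Z2Z2 := liftOfInvolutions (of_mul_self 0) (of_mul_self 1)

def equivDihedral : Z2Z2 ≃* DihedralGroup 0 :=
  toDihedral.toMulEquiv ofDihedral
    (PresentedGroup.ext fun i => by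
      fin_cases i
      · simp [ofDihedral, toDihedral_of, liftOfInvolutions_sr]
      · simp [ofDihedral, toDihedral_of, liftOfInvolutions_sr, ← mul_assoc, of_mul_self])
    (by
      apply MonoidHom.ext
      rintro (i | i)
      · simp [ofDihedral, liftOfInvolutions_r, toDihedral_of, sr_mul_sr]
      · simp [ofDihedral, liftOfInvolutions_sr, toDihedral_of, sr_mul_sr])

end Z2Z2

/-- For `G = ℤ/2 * ℤ/2` one has `γ₁(G)/γ₂(G) ≅ ℤ/2 ⊕ ℤ/2` and `γ_k(G)/γ_{k+1}(G) ≅ ℤ/2`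
for every `k ≥ 2` (here `γ_k = lowerCentralSeries _ (k - 1)`). -/
theorem lcs_quotients_Z2Z2 :
    Nonempty ((Z2Z2 ⧸ (⊤ : Subgroup Z2Z2).lowerCentralSeries 1) ≃*
      Multiplicative (ZMod 2 × ZMod 2)) ∧
    ∀ k : ℕ, 2 ≤ k →
      Nonempty ((((⊤ : Subgroup Z2Z2).lowerCentralSeries (k - 1)) ⧸
        (((⊤ : Subgroup Z2Z2).lowerCentralSeries k).subgroupOf ((⊤ : Subgroup Z2Z2).lowerCentralSeries (k - 1)))) ≃*
          Multiplicative (ZMod 2)) := by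
  open DihedralGroup in
  let e : Z2Z2 ≃* DihedralGroup 0 := Z2Z2.equivDihedral
  have hmap := map_top_lowerCentralSeries_of_surjective (f := e.toMonoidHom) e.surjective
  -- `γ₂` is the commutator subgroup, so `G / γ₂` is by definition the abelianization.
  refine ⟨⟨e.abelianizationCongr.trans (abelianizationEquiv (dvd_zero 2))⟩, fun k hk => ?_⟩
  obtain ⟨m, rfl⟩ : ∃ m, k = m + 2 := ⟨k - 2, by omega⟩
  have hA := (hmap (m + 1)).trans (lowerCentralSeries_succ_eq_zpowers_r m)
  have hB : _ = zpowers (r (2 ^ (m + 1)) ^ 2) := (hmap (m + 2)).trans <| by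
    rw [lowerCentralSeries_succ_eq_zpowers_r, r_pow, pow_succ, Nat.cast_ofNat]
  obtain ⟨f⟩ := nonempty_zpowers_quotient_mulEquiv_zmod
    (not_isOfFinOrder_r (pow_ne_zero (m + 1) two_ne_zero)) 2
  exact ⟨(QuotientGroup.quotientSubgroupOfCongr e hA hB).trans f⟩
end

section
/- Let G be a group and suppose x ∈ γ_2(G) = G'. Then for any elements g_p, g_q ∈ G, the congruence (g_q, (g_p, x)) ≡ (g_p, (g_q, x)) mod (G', G') holds. -/
/-!
Modulo `G'' = (G', G')` the derived subgroup is an abelian normal subgroup `A`. Writing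
`x ^ g = g⁻¹ x g`, one has `(g, y) = (y ^ g)⁻¹ y`, hence for `x ∈ A`
`(q, (p, x)) = (x ^ q)⁻¹ · x ^ (p q) · (x ^ p)⁻¹ · x`. In the abelian group `A` this is symmetric
in `p` and `q` except for `x ^ (p q)` against `x ^ (q p)`, and these agree because
`p q = q p · (p, q)` with `(p, q) ∈ A` commuting with `x ^ (q p) ∈ A`.
-/

/-- The group commutator with the convention `(a, b) = a⁻¹ b⁻¹ a b`. -/
def gcomm {G : Type*} [Group G] (a b : G) : G := a⁻¹ * b⁻¹ * a * b

open Subgroup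
open scoped commutatorElement

section

variable {G : Type*} [Group G]

lemma gcomm_eq_commutatorElement (a b : G) : gcomm a b = ⁅a⁻¹, b⁻¹⁆ := by
  simp [gcomm, commutatorElement_def]

lemma gcomm_mem_commutator (a b : G) : gcomm a b ∈ commutator G := by
  rw [gcomm_eq_commutatorElement, commutator_def]
  exact commutator_mem_commutator (mem_top _) (mem_top _)

lemma map_gcomm {H : Type*} [Group H] (f : G →* H) (a b : G) :
    f (gcomm a b) = gcomm (f a) (f b) := by
  simp [gcomm]

lemma gcomm_gcomm (p q x : G) :
    gcomm q (gcomm p x) =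
      (q⁻¹ * x * q)⁻¹ * ((p * q)⁻¹ * x * (p * q)) * (p⁻¹ * x * p)⁻¹ * x := by
  simp only [gcomm]
  group

lemma mul_eq_mul_mul_gcomm (p q : G) : p * q = q * p * gcomm p q := by
  simp only [gcomm]
  group

theorem gcomm_gcomm_comm_of_mem {A : Subgroup G} [A.Normal] [IsMulCommutative A] {p q x : G}
    (hx : x ∈ A) (hpq : gcomm p q ∈ A) :
    gcomm q (gcomm p x) = gcomm p (gcomm q x) := by
  have conj_mem (g : G) : g⁻¹ * x * g ∈ A := by
    simpa using Normal.conj_mem ‹_› x hx g⁻¹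
  have hswap : (p * q)⁻¹ * x * (p * q) = (q * p)⁻¹ * x * (q * p) := calc
    _ = (gcomm p q)⁻¹ * ((q * p)⁻¹ * x * (q * p)) * gcomm p q := by
      rw [mul_eq_mul_mul_gcomm p q]; group
    _ = _ := by rw [setLike_mul_comm (inv_mem hpq) (conj_mem _), inv_mul_cancel_right]
  rw [gcomm_gcomm, gcomm_gcomm, hswap]
  congr 1
  have ha := inv_mem (conj_mem q)
  have hb := inv_mem (conj_mem p)
  have hc := conj_mem (q * p)
  rw [setLike_mul_comm ha hc, mul_assoc, setLike_mul_comm ha hb, ← mul_assoc,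
    setLike_mul_comm hc hb]

lemma commutator_quotient_eq_map (N : Subgroup G) [N.Normal] :
    commutator (G ⧸ N) = (commutator G).map (QuotientGroup.mk' N) := by
  rw [map_commutator_eq, MonoidHom.range_eq_top.mpr (QuotientGroup.mk'_surjective N),
    commutator_def]

instance isMulCommutative_commutator_quotient_commutator_commutator :
    IsMulCommutative (commutator (G ⧸ ⁅commutator G, commutator G⁆)) := by
  rw [← commutator_self_eq_bot_iff, commutator_quotient_eq_map, ← map_commutator,
    QuotientGroup.map_mk'_self]

end

/-- For `x ∈ G' = γ₂(G)`, `(g_q, (g_p, x)) ≡ (g_p, (g_q, x))` modulo `(G', G')`. -/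
theorem swap_mod_second_derived {G : Type*} [Group G] (x : G) (hx : x ∈ commutator G)
    (gp gq : G) :
    gcomm gq (gcomm gp x) * (gcomm gp (gcomm gq x))⁻¹ ∈
      ⁅commutator G, commutator G⁆ := by
  set π := QuotientGroup.mk' ⁅commutator G, commutator G⁆
  have hxπ : π x ∈ commutator (G ⧸ ⁅commutator G, commutator G⁆) := by
    rw [commutator_quotient_eq_map]
    exact mem_map_of_mem π hx
  rw [← QuotientGroup.eq_one_iff, ← QuotientGroup.mk'_apply, map_mul, map_inv, mul_inv_eq_one]
  simp only [map_gcomm]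
  exact gcomm_gcomm_comm_of_mem hxπ (gcomm_mem_commutator _ _)
end
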